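/- arXiv:1310.1115 — 2 statements merged into one kernel-verified Lean document; each statement's English description precedes it below -/
import Mathlib

section
/- Let Ω ⊆ ℝ^d be closed, 1 ≤ q_r < q_a ≤ 2, and ω a probability measure on Ω with finite q_a-th moment. Then for every probability measure μ on Ω with finite q_r-th moment, the energy E[μ] = ∫∫ |x-y|^{q_a} dω dμ - (1/2)∫∫ |x-y|^{q_r} dμ dμ satisfies the moment bound: there exist constants M > 0, c > 0 and C ≥ 0 (depending only on q_a, q_r, ω) such that ∫ |x|^{q_a} dμ(x) ≤ M^{q_a} + (2/c)(E[μ] + ∫ |x|^{q_a} dω(x)). In particular the sublevels of E have uniformly bounded q_a-th moments. -/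
/-!
Integrating `2^(1-q_a) |y|^{q_a} ≤ |x - y|^{q_a} + |x|^{q_a}` against `ω ⊗ μ` bounds the
attractive part of the energy from below by `2^(1-q_a) ∫|y|^{q_a} dμ - ∫|x|^{q_a} dω`, while
`|x - y|^{q_r} ≤ 2^(q_r-1) (|x|^{q_r} + |y|^{q_r})` bounds the repulsive part from above by
`2^(q_r-1) ∫|x|^{q_r} dμ`. As `q_r < q_a`, the bound `t^{q_r} ≤ M^{q_r} + M^{q_r-q_a} t^{q_a}`
with `M` large lets the repulsive part eat at most half of the attractive lower bound, and the other
half is the moment bound.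
-/

open MeasureTheory

lemma Real.rpow_add_le_mul_rpow_add_rpow {a b p : ℝ} (ha : 0 ≤ a) (hb : 0 ≤ b)
    (hp : 1 ≤ p) : (a + b) ^ p ≤ 2 ^ (p - 1) * (a ^ p + b ^ p) := by
  have h := NNReal.coe_le_coe.2 (NNReal.rpow_add_le_mul_rpow_add_rpow ⟨a, ha⟩ ⟨b, hb⟩ hp)
  push_cast [NNReal.coe_rpow] at h
  exact h

lemma Real.rpow_le_rpow_add_mul_rpow {p q M t : ℝ} (hp : 0 ≤ p) (hpq : p ≤ q) (hM : 0 < M)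
    (ht : 0 ≤ t) : t ^ p ≤ M ^ p + M ^ (p - q) * t ^ q := by
  rcases le_or_gt t M with htM | hMt
  · have htM_rpow : t ^ p ≤ M ^ p := Real.rpow_le_rpow ht htM hp
    have : 0 ≤ M ^ (p - q) * t ^ q := by positivity
    linarith
  · have htp : t ^ p = t ^ (p - q) * t ^ q := by
      rw [← Real.rpow_add (hM.trans hMt), sub_add_cancel]
    have htq : t ^ (p - q) ≤ M ^ (p - q) := Real.rpow_le_rpow_of_nonpos hM hMt.le (by linarith)
    have : t ^ p ≤ M ^ (p - q) * t ^ q := by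
      rw [htp]; gcongr
    have : 0 ≤ M ^ p := by positivity
    linarith

lemma ENNReal.mul_le_tsub_add_add {c T A W B K : ENNReal} (hB : B ≠ ⊤)
    (hA : 2 * c * T ≤ A + W) (hBK : B ≤ K + c * T) : c * T ≤ A - B + W + K := by
  refine ENNReal.le_of_add_le_add_right hB ?_
  calc c * T + B ≤ c * T + (K + c * T) := by gcongr
    _ = 2 * c * T + K := by ring
    _ ≤ A + W + K := by gcongr
    _ ≤ A - B + B + W + K := by gcongr; exact le_tsub_add
    _ = A - B + W + K + B := by ring

lemma ENNReal.le_ofReal_add_ofReal_inv_mul {c K : ℝ} {T X : ENNReal} (hc : 0 < c)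
    (h : ENNReal.ofReal c * T ≤ X + ENNReal.ofReal (c * K)) :
    T ≤ ENNReal.ofReal K + ENNReal.ofReal c⁻¹ * X := by
  have hcinv : ENNReal.ofReal c⁻¹ * ENNReal.ofReal c = 1 := by
    rw [← ENNReal.ofReal_mul (by positivity), inv_mul_cancel₀ hc.ne', ENNReal.ofReal_one]
  calc T = ENNReal.ofReal c⁻¹ * (ENNReal.ofReal c * T) := by rw [← mul_assoc, hcinv, one_mul]
    _ ≤ _ := by
      grw [h, mul_add, add_comm, ENNReal.ofReal_mul hc.le, ← mul_assoc, hcinv, one_mul]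

section NormRpow

variable {E : Type*} [NormedAddCommGroup E] {p : ℝ}

lemma norm_sub_rpow_le (hp : 1 ≤ p) (x y : E) :
    ‖x - y‖ ^ p ≤ 2 ^ (p - 1) * (‖x‖ ^ p + ‖y‖ ^ p) :=
  (Real.rpow_le_rpow (norm_nonneg _) (norm_sub_le x y) (by linarith)).trans
    (Real.rpow_add_le_mul_rpow_add_rpow (norm_nonneg _) (norm_nonneg _) hp)

lemma two_rpow_one_sub_mul_norm_rpow_le (hp : 1 ≤ p) (x y : E) :
    2 ^ (1 - p) * ‖y‖ ^ p ≤ ‖x - y‖ ^ p + ‖x‖ ^ p := by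
  have h : ‖y‖ ^ p ≤ 2 ^ (p - 1) * (‖x - y‖ ^ p + ‖x‖ ^ p) := by
    simpa only [sub_sub_cancel_left, norm_neg] using norm_sub_rpow_le hp (x - y) x
  have h2 : (2 : ℝ) ^ (1 - p) * 2 ^ (p - 1) = 1 := by
    rw [← Real.rpow_add two_pos]; norm_num
  calc 2 ^ (1 - p) * ‖y‖ ^ p
      ≤ 2 ^ (1 - p) * (2 ^ (p - 1) * (‖x - y‖ ^ p + ‖x‖ ^ p)) := by gcongr
    _ = ‖x - y‖ ^ p + ‖x‖ ^ p := by rw [← mul_assoc, h2, one_mul]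

section Lintegral

variable [MeasurableSpace E]

lemma lintegral_norm_rpow_le (hp : 0 ≤ p) {q M : ℝ} (hpq : p ≤ q) (hM : 0 < M)
    (μ : Measure E) [IsProbabilityMeasure μ] :
    ∫⁻ x, ENNReal.ofReal (‖x‖ ^ p) ∂μ ≤
      ENNReal.ofReal (M ^ p) +
        ENNReal.ofReal (M ^ (p - q)) * ∫⁻ x, ENNReal.ofReal (‖x‖ ^ q) ∂μ := by
  calc ∫⁻ x, ENNReal.ofReal (‖x‖ ^ p) ∂μ
      ≤ ∫⁻ x, ENNReal.ofReal (M ^ p) +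
          ENNReal.ofReal (M ^ (p - q)) * ENNReal.ofReal (‖x‖ ^ q) ∂μ :=
        lintegral_mono fun x => by
          rw [← ENNReal.ofReal_mul (by positivity), ← ENNReal.ofReal_add (by positivity)
            (by positivity)]
          exact ENNReal.ofReal_le_ofReal
            (Real.rpow_le_rpow_add_mul_rpow hp hpq hM (norm_nonneg x))
    _ = _ := by
        rw [lintegral_add_left measurable_const, lintegral_const, measure_univ, mul_one,
          lintegral_const_mul' _ _ ENNReal.ofReal_ne_top]

variable [OpensMeasurableSpace E]

lemma ofReal_mul_lintegral_norm_rpow_le (hp : 1 ≤ p) (μ ν : Measure E) [IsProbabilityMeasure μ]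
    [IsProbabilityMeasure ν] :
    ENNReal.ofReal (2 ^ (1 - p)) * ∫⁻ y, ENNReal.ofReal (‖y‖ ^ p) ∂μ ≤
      (∫⁻ y, ∫⁻ x, ENNReal.ofReal (‖x - y‖ ^ p) ∂ν ∂μ) +
        ∫⁻ x, ENNReal.ofReal (‖x‖ ^ p) ∂ν := by
  have hpt (y : E) : ENNReal.ofReal (2 ^ (1 - p) * ‖y‖ ^ p) ≤
      (∫⁻ x, ENNReal.ofReal (‖x - y‖ ^ p) ∂ν) +
        ∫⁻ x, ENNReal.ofReal (‖x‖ ^ p) ∂ν := by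
    rw [← lintegral_add_right _ (measurable_norm.pow_const p).ennreal_ofReal,
      ← mul_one (ENNReal.ofReal _), ← measure_univ (μ := ν), ← lintegral_const]
    refine lintegral_mono fun x => ?_
    rw [← ENNReal.ofReal_add (by positivity) (by positivity)]
    exact ENNReal.ofReal_le_ofReal (two_rpow_one_sub_mul_norm_rpow_le hp x y)
  calc ENNReal.ofReal (2 ^ (1 - p)) * ∫⁻ y, ENNReal.ofReal (‖y‖ ^ p) ∂μ
      = ∫⁻ y, ENNReal.ofReal (2 ^ (1 - p) * ‖y‖ ^ p) ∂μ := by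
        rw [← lintegral_const_mul' _ _ ENNReal.ofReal_ne_top]
        simp_rw [ENNReal.ofReal_mul (by positivity : (0 : ℝ) ≤ 2 ^ (1 - p))]
    _ ≤ _ := (lintegral_mono hpt).trans_eq <| by
        rw [lintegral_add_right _ measurable_const, lintegral_const, measure_univ, mul_one]

lemma half_mul_lintegral_lintegral_norm_sub_rpow_le (hp : 1 ≤ p) (μ : Measure E)
    [IsProbabilityMeasure μ] :
    1 / 2 * ∫⁻ x, ∫⁻ y, ENNReal.ofReal (‖x - y‖ ^ p) ∂μ ∂μ ≤
      ENNReal.ofReal (2 ^ (p - 1)) * ∫⁻ x, ENNReal.ofReal (‖x‖ ^ p) ∂μ := by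
  have hmeas : Measurable fun x : E => ENNReal.ofReal (‖x‖ ^ p) :=
    (measurable_norm.pow_const p).ennreal_ofReal
  have hpt (x y : E) : ENNReal.ofReal (‖x - y‖ ^ p) ≤
      ENNReal.ofReal (2 ^ (p - 1)) *
        (ENNReal.ofReal (‖x‖ ^ p) + ENNReal.ofReal (‖y‖ ^ p)) := by
    rw [← ENNReal.ofReal_add (by positivity) (by positivity),
      ← ENNReal.ofReal_mul (by positivity)]
    exact ENNReal.ofReal_le_ofReal (norm_sub_rpow_le hp x y)
  rw [one_div, mul_comm, ← div_eq_mul_inv]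
  refine ENNReal.div_le_of_le_mul' ?_
  calc ∫⁻ x, ∫⁻ y, ENNReal.ofReal (‖x - y‖ ^ p) ∂μ ∂μ
      ≤ ∫⁻ x, ∫⁻ y, ENNReal.ofReal (2 ^ (p - 1)) *
          (ENNReal.ofReal (‖x‖ ^ p) + ENNReal.ofReal (‖y‖ ^ p)) ∂μ ∂μ :=
        lintegral_mono fun x => lintegral_mono (hpt x)
    _ = 2 * (ENNReal.ofReal (2 ^ (p - 1)) * ∫⁻ x, ENNReal.ofReal (‖x‖ ^ p) ∂μ) := by
        simp only [lintegral_const_mul' _ _ ENNReal.ofReal_ne_top, lintegral_add_right _ hmeas,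
          lintegral_add_left hmeas, lintegral_const, measure_univ, mul_one]
        ring

lemma lintegral_norm_rpow_le_of_energy {qr qa M : ℝ} (hqr : 1 ≤ qr) (hq : qr < qa) (hM : 0 < M)
    (hMc : 2 ^ (qr - 1) * M ^ (qr - qa) = 2 ^ (1 - qa) / 2) (μ ω : Measure E)
    [IsProbabilityMeasure μ] [IsProbabilityMeasure ω]
    (hR : ∫⁻ x, ENNReal.ofReal (‖x‖ ^ qr) ∂μ < ⊤) :
    ∫⁻ x, ENNReal.ofReal (‖x‖ ^ qa) ∂μ ≤
      ENNReal.ofReal (M ^ qa) + ENNReal.ofReal (2 / 2 ^ (1 - qa)) *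
        (((∫⁻ y, ∫⁻ x, ENNReal.ofReal (‖x - y‖ ^ qa) ∂ω ∂μ)
            - (1 / 2) * ∫⁻ x, ∫⁻ y, ENNReal.ofReal (‖x - y‖ ^ qr) ∂μ ∂μ)
          + ∫⁻ x, ENNReal.ofReal (‖x‖ ^ qa) ∂ω) := by
  set T := ∫⁻ x, ENNReal.ofReal (‖x‖ ^ qa) ∂μ
  set R := ∫⁻ x, ENNReal.ofReal (‖x‖ ^ qr) ∂μ
  set B := ∫⁻ x, ∫⁻ y, ENNReal.ofReal (‖x - y‖ ^ qr) ∂μ ∂μ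
  set c : ℝ := 2 ^ (1 - qa) / 2 with hc
  have hc0 : 0 < c := by positivity
  have hhalfB : 1 / 2 * B ≤ ENNReal.ofReal (2 ^ (qr - 1)) * R :=
    half_mul_lintegral_lintegral_norm_sub_rpow_le hqr μ
  have hattraction : 2 * ENNReal.ofReal c * T ≤
      (∫⁻ y, ∫⁻ x, ENNReal.ofReal (‖x - y‖ ^ qa) ∂ω ∂μ) +
        ∫⁻ x, ENNReal.ofReal (‖x‖ ^ qa) ∂ω := by
    rw [← ENNReal.ofReal_ofNat 2, ← ENNReal.ofReal_mul zero_le_two, hc,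
      mul_div_cancel₀ _ two_ne_zero]
    exact ofReal_mul_lintegral_norm_rpow_le (by linarith) μ ω
  have hrepulsion : 1 / 2 * B ≤ ENNReal.ofReal (c * M ^ qa) + ENNReal.ofReal c * T := by
    have hMqr : 2 ^ (qr - 1) * M ^ qr = c * M ^ qa := by
      rw [← hMc, mul_assoc, ← Real.rpow_add hM, sub_add_cancel]
    calc 1 / 2 * B ≤ ENNReal.ofReal (2 ^ (qr - 1)) * R := hhalfB
      _ ≤ ENNReal.ofReal (2 ^ (qr - 1)) *
          (ENNReal.ofReal (M ^ qr) + ENNReal.ofReal (M ^ (qr - qa)) * T) := by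
        gcongr; exact lintegral_norm_rpow_le (by linarith) hq.le hM μ
      _ = ENNReal.ofReal (c * M ^ qa) + ENNReal.ofReal c * T := by
        rw [mul_add, ← mul_assoc, ← ENNReal.ofReal_mul (by positivity),
          ← ENNReal.ofReal_mul (by positivity), hMqr, hMc]
  have hBfin : 1 / 2 * B ≠ ⊤ :=
    (hhalfB.trans_lt (ENNReal.mul_lt_top ENNReal.ofReal_lt_top hR)).ne
  have hcT := ENNReal.mul_le_tsub_add_add hBfin hattraction hrepulsion
  simpa only [hc, inv_div] using ENNReal.le_ofReal_add_ofReal_inv_mul hc0 hcT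

end Lintegral

end NormRpow

theorem stmt_9_general (d : ℕ) (Ω : Set (EuclideanSpace ℝ (Fin d)))
    (qr qa : ℝ) (h1 : 1 ≤ qr) (h2 : qr < qa)
    (ω : Measure (EuclideanSpace ℝ (Fin d))) [IsProbabilityMeasure ω] :
    ∃ M > (0:ℝ), ∃ c > (0:ℝ),
      ∀ μ : Measure (EuclideanSpace ℝ (Fin d)),
        IsProbabilityMeasure μ → μ Ωᶜ = 0 →
        (∫⁻ x, ENNReal.ofReal (‖x‖ ^ qr) ∂μ) < ⊤ →
        (∫⁻ x, ENNReal.ofReal (‖x‖ ^ qa) ∂μ) ≤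
          ENNReal.ofReal (M ^ qa) + ENNReal.ofReal (2 / c) *
            (((∫⁻ y, ∫⁻ x, ENNReal.ofReal (‖x - y‖ ^ qa) ∂ω ∂μ)
                - (1 / 2) * ∫⁻ x, ∫⁻ y, ENNReal.ofReal (‖x - y‖ ^ qr) ∂μ ∂μ)
              + ∫⁻ x, ENNReal.ofReal (‖x‖ ^ qa) ∂ω) := by
  set M : ℝ := (2 ^ (1 - qa) / 2 / 2 ^ (qr - 1)) ^ (qr - qa)⁻¹
  have hM : 2 ^ (qr - 1) * M ^ (qr - qa) = 2 ^ (1 - qa) / 2 := by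
    rw [Real.rpow_inv_rpow (by positivity) (by linarith), mul_div_cancel₀ _ (by positivity)]
  refine ⟨M, by positivity, 2 ^ (1 - qa), by positivity, fun μ _ _ hR => ?_⟩
  exact lintegral_norm_rpow_le_of_energy h1 h2 (by positivity) hM μ ω hR

theorem stmt_9 (d : ℕ) (Ω : Set (EuclideanSpace ℝ (Fin d))) (hΩ : IsClosed Ω)
    (qr qa : ℝ) (h1 : 1 ≤ qr) (h2 : qr < qa) (h3 : qa ≤ 2)
    (ω : Measure (EuclideanSpace ℝ (Fin d))) [IsProbabilityMeasure ω]
    (hωΩ : ω Ωᶜ = 0)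
    (hωmom : ∫⁻ x, ENNReal.ofReal (‖x‖ ^ qa) ∂ω < ⊤) :
    ∃ M > (0:ℝ), ∃ c > (0:ℝ),
      ∀ μ : Measure (EuclideanSpace ℝ (Fin d)),
        IsProbabilityMeasure μ → μ Ωᶜ = 0 →
        (∫⁻ x, ENNReal.ofReal (‖x‖ ^ qr) ∂μ) < ⊤ →
        (∫⁻ x, ENNReal.ofReal (‖x‖ ^ qa) ∂μ) ≤
          ENNReal.ofReal (M ^ qa) + ENNReal.ofReal (2 / c) *
            (((∫⁻ y, ∫⁻ x, ENNReal.ofReal (‖x - y‖ ^ qa) ∂ω ∂μ)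
                - (1 / 2) * ∫⁻ x, ∫⁻ y, ENNReal.ofReal (‖x - y‖ ^ qr) ∂μ ∂μ)
              + ∫⁻ x, ENNReal.ofReal (‖x‖ ^ qa) ∂ω) :=
  stmt_9_general d Ω qr qa h1 h2 ω
end

section
/- Let Ω = ℝ, 1 ≤ q_a < q_r ≤ 2, ω the uniform probability measure on [-1, 0], and μ_n the uniform probability measure on [0, n]. Then the attraction term V[μ_n] = ∫∫ |x-y|^{q_a} dω(x) dμ_n(y) satisfies V[μ_n] ≤ (n+1)^{q_a}/(q_a + 1), the repulsion term W[μ_n] = -(1/2)∫∫ |x-y|^{q_r} dμ_n dμ_n equals -n^{q_r}/((q_r+1)(q_r+2)), and consequently E[μ_n] = V[μ_n] + W[μ_n] → -∞ as n → ∞. In particular E has no minimizer over probability measures on ℝ. -/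
/-!
Both energies of `μ_n` reduce to integrals of powers over intervals, and the repulsion is computed
exactly. For the attraction, `n V[μ_n] = ∫₀ⁿ ((y+1)^{q+1} - y^{q+1})/(q+1) dy`, and by the
tangent-line inequality for the convex function `t ↦ t^q` (`q ≥ 1`) the integrand is dominated by
the derivative of `y (y+1)^q/(q+1)`. Since `q_a < q_r`, the repulsion `≈ -n^{q_r}` beats
`V[μ_n] = O(n^{q_a})`, so `E[μ_n] → -∞`, and no probability measure can have energy below all
the `E[μ_n]`.
-/

open MeasureTheory Filter Topology ENNReal

open Set

open scoped ProbabilityTheory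

theorem integral_abs_sub_rpow_of_le {a b c q : ℝ} (hq : -1 < q) (hca : c ≤ a) (hcb : c ≤ b) :
    ∫ x in a..b, |x - c| ^ q = ((b - c) ^ (q + 1) - (a - c) ^ (q + 1)) / (q + 1) := by
  have h : EqOn (fun x => |x - c| ^ q) (fun x => (x - c) ^ q) (uIcc a b) := fun x hx => by
    dsimp only
    rw [abs_of_nonneg (sub_nonneg.2 ((le_min hca hcb).trans hx.1))]
  rw [intervalIntegral.integral_congr h, intervalIntegral.integral_comp_sub_right (· ^ q),
    integral_rpow (Or.inl hq)]

theorem integral_abs_sub_rpow_of_ge {a b c q : ℝ} (hq : -1 < q) (hac : a ≤ c) (hbc : b ≤ c) :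
    ∫ x in a..b, |x - c| ^ q = ((c - a) ^ (q + 1) - (c - b) ^ (q + 1)) / (q + 1) := by
  have h : EqOn (fun x => |x - c| ^ q) (fun x => (c - x) ^ q) (uIcc a b) := fun x hx => by
    dsimp only
    rw [abs_sub_comm, abs_of_nonneg (sub_nonneg.2 (hx.2.trans (max_le hac hbc)))]
  rw [intervalIntegral.integral_congr h, intervalIntegral.integral_comp_sub_left (· ^ q),
    integral_rpow (Or.inl hq)]

theorem intervalIntegrable_abs_sub_rpow {q : ℝ} (hq : -1 < q) (a b c : ℝ) :
    IntervalIntegrable (fun x => |x - c| ^ q) volume a b := by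
  suffices h : ∀ b, IntervalIntegrable (fun x => |x - c| ^ q) volume c b from
    (h a).symm.trans (h b)
  intro b
  rcases le_total c b with hcb | hbc
  · have h := (intervalIntegral.intervalIntegrable_rpow' hq (a := 0) (b := b - c)).comp_sub_right c
    rw [zero_add, sub_add_cancel] at h
    refine h.congr_uIoo fun x hx => ?_
    rw [uIoo_of_le hcb] at hx
    simp only [abs_of_pos (sub_pos.2 hx.1)]
  · have h := (intervalIntegral.intervalIntegrable_rpow' hq (a := 0) (b := c - b)).comp_sub_left c
    rw [sub_zero, sub_sub_cancel c b] at h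
    refine h.congr_uIoo fun x hx => ?_
    rw [uIoo_of_ge hbc] at hx
    simp only [abs_of_neg (sub_neg.2 hx.2), neg_sub]

theorem integral_abs_sub_rpow_of_mem_Icc {a x q : ℝ} (hq : -1 < q) (hx : x ∈ Icc 0 a) :
    ∫ y in (0)..a, |x - y| ^ q = (x ^ (q + 1) + (a - x) ^ (q + 1)) / (q + 1) := by
  simp_rw [abs_sub_comm x]
  rw [← intervalIntegral.integral_add_adjacent_intervals (b := x)
    (intervalIntegrable_abs_sub_rpow hq _ _ _) (intervalIntegrable_abs_sub_rpow hq _ _ _),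
    integral_abs_sub_rpow_of_ge hq hx.1 le_rfl, integral_abs_sub_rpow_of_le hq le_rfl hx.2,
    sub_zero, sub_self, Real.zero_rpow (by linarith)]
  ring

theorem integral_integral_abs_sub_rpow {a q : ℝ} (hq : -1 < q) (ha : 0 ≤ a) :
    ∫ x in (0)..a, ∫ y in (0)..a, |x - y| ^ q = 2 * a ^ (q + 2) / ((q + 1) * (q + 2)) := by
  have hq1 : 0 < q + 1 := by linarith
  have hcont : Continuous fun x : ℝ => x ^ (q + 1) :=
    continuous_id.rpow_const fun _ => Or.inr hq1.le
  have hcont' : Continuous fun x : ℝ => (a - x) ^ (q + 1) :=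
    hcont.comp (continuous_const.sub continuous_id)
  rw [intervalIntegral.integral_congr fun x hx =>
      integral_abs_sub_rpow_of_mem_Icc hq (uIcc_of_le ha ▸ hx),
    intervalIntegral.integral_div, intervalIntegral.integral_add (hcont.intervalIntegrable _ _)
      (hcont'.intervalIntegrable _ _),
    intervalIntegral.integral_comp_sub_left (· ^ (q + 1)), sub_self, sub_zero,
    integral_rpow (Or.inl (by linarith)), Real.zero_rpow (by linarith)]
  rw [show q + 1 + 1 = q + 2 by ring]
  field_simp
  ring

theorem add_one_rpow_sub_rpow_le {y q : ℝ} (hy : 0 ≤ y) (hq : 1 ≤ q) :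
    (y + 1) ^ q - y ^ q ≤ q * (y + 1) ^ (q - 1) := by
  have hy1 : 0 < y + 1 := by linarith
  have h := one_add_mul_self_le_rpow_one_add (s := -(y + 1)⁻¹)
    (by rw [neg_le_neg_iff]; exact inv_le_one_of_one_le₀ (by linarith)) hq
  rw [show 1 + -(y + 1)⁻¹ = y / (y + 1) by field_simp; ring, Real.div_rpow hy hy1.le,
    le_div_iff₀ (by positivity)] at h
  rw [Real.rpow_sub_one hy1.ne']
  linarith [show (1 + q * -(y + 1)⁻¹) * (y + 1) ^ q = (y + 1) ^ q - q * ((y + 1) ^ q / (y + 1)) by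
    field_simp; ring]

theorem integral_integral_abs_sub_rpow_le {a q : ℝ} (hq : 1 ≤ q) (ha : 0 ≤ a) :
    ∫ y in (0)..a, ∫ x in (-1)..0, |x - y| ^ q ≤ a * (a + 1) ^ q / (q + 1) := by
  have hcont : ∀ b p : ℝ, 0 ≤ p → Continuous fun y : ℝ => (y + b) ^ p := fun b p hp =>
    (continuous_id.add continuous_const).rpow_const fun _ => Or.inr hp
  have hderiv : ∀ y ∈ uIcc 0 a, HasDerivAt (fun y => y * (y + 1) ^ q)
      ((y + 1) ^ q + y * (q * (y + 1) ^ (q - 1))) y := fun y _ => by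
    simpa only [one_mul] using
      (hasDerivAt_id' y).fun_mul (((hasDerivAt_id' y).add_const 1).rpow_const (Or.inr hq))
  have hint : IntervalIntegrable (fun y => (y + 1) ^ q + y * (q * (y + 1) ^ (q - 1))) volume 0 a :=
    ((hcont 1 q (by linarith)).add (continuous_id.mul (continuous_const.mul
      (hcont 1 (q - 1) (by linarith))))).intervalIntegrable _ _
  have hle : ∀ y ∈ Icc 0 a,
      (y + 1) ^ (q + 1) - y ^ (q + 1) ≤ (y + 1) ^ q + y * (q * (y + 1) ^ (q - 1)) := by
    intro y hy
    rw [Real.rpow_add_one' (by linarith [hy.1]) (by linarith),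
      Real.rpow_add_one' hy.1 (by linarith)]
    nlinarith [mul_le_mul_of_nonneg_left (add_one_rpow_sub_rpow_le hy.1 hq) hy.1]
  calc ∫ y in (0)..a, ∫ x in (-1)..0, |x - y| ^ q
      = (∫ y in (0)..a, ((y + 1) ^ (q + 1) - y ^ (q + 1))) / (q + 1) := by
        rw [← intervalIntegral.integral_div]
        refine intervalIntegral.integral_congr fun y hy => ?_
        rw [uIcc_of_le ha] at hy
        rw [integral_abs_sub_rpow_of_ge (by linarith : -1 < q) (by linarith [hy.1]) hy.1,
          sub_neg_eq_add, sub_zero]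
    _ ≤ (∫ y in (0)..a, ((y + 1) ^ q + y * (q * (y + 1) ^ (q - 1)))) / (q + 1) := by
        gcongr
        refine intervalIntegral.integral_mono_on ha ?_ hint hle
        exact ((hcont 1 _ (by linarith)).sub
          (by simpa using hcont 0 (q + 1) (by linarith))).intervalIntegrable _ _
    _ = a * (a + 1) ^ q / (q + 1) := by
        rw [intervalIntegral.integral_eq_sub_of_hasDerivAt hderiv hint]
        simp

theorem integral_Icc_eq_intervalIntegral {a b : ℝ} (hab : a ≤ b) (f : ℝ → ℝ) :
    ∫ x in Icc a b, f x = ∫ x in a..b, f x := by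
  rw [integral_Icc_eq_integral_Ioc, intervalIntegral.integral_of_le hab]

theorem integral_cond_Icc {a b : ℝ} (hab : a ≤ b) (f : ℝ → ℝ) :
    ∫ x, f x ∂volume[|Icc a b] = (b - a)⁻¹ * ∫ x in a..b, f x := by
  rw [ProbabilityTheory.cond, integral_smul_measure, Real.volume_Icc, toReal_inv,
    toReal_ofReal (sub_nonneg.2 hab), smul_eq_mul, integral_Icc_eq_intervalIntegral hab]

theorem integral_integral_abs_sub_rpow_cond_Icc_le {a q : ℝ} (hq : 1 ≤ q) (ha : 0 < a) :
    ∫ y, ∫ x, |x - y| ^ q ∂volume.restrict (Icc (-1) 0) ∂volume[|Icc 0 a]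
      ≤ (a + 1) ^ q / (q + 1) := by
  simp only [integral_cond_Icc ha.le, integral_Icc_eq_intervalIntegral (neg_nonpos.2 zero_le_one),
    sub_zero]
  calc a⁻¹ * ∫ y in (0)..a, ∫ x in (-1)..0, |x - y| ^ q
      ≤ a⁻¹ * (a * (a + 1) ^ q / (q + 1)) := by
        gcongr
        exact integral_integral_abs_sub_rpow_le hq ha.le
    _ = (a + 1) ^ q / (q + 1) := by field_simp

theorem integral_integral_abs_sub_rpow_cond_Icc {a q : ℝ} (hq : -1 < q) (ha : 0 < a) :
    ∫ x, ∫ y, |x - y| ^ q ∂volume[|Icc 0 a] ∂volume[|Icc 0 a]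
      = 2 * a ^ q / ((q + 1) * (q + 2)) := by
  simp only [integral_cond_Icc ha.le, sub_zero, intervalIntegral.integral_const_mul]
  rw [integral_integral_abs_sub_rpow hq ha.le, Real.rpow_add ha, Real.rpow_two]
  field_simp

theorem tendsto_mul_rpow_sub_mul_rpow_atBot {p r C c : ℝ} (hp : 0 < p) (hpr : p < r) (hc : 0 < c) :
    Tendsto (fun x : ℝ => C * x ^ p - c * x ^ r) atTop atBot := by
  have h : Tendsto (fun x : ℝ => x ^ p * (C + -(c * x ^ (r - p)))) atTop atBot :=
    (tendsto_rpow_atTop hp).atTop_mul_atBot₀ (tendsto_atBot_add_const_left _ C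
      (tendsto_neg_atTop_atBot.comp ((tendsto_rpow_atTop (sub_pos.2 hpr)).const_mul_atTop hc)))
  refine h.congr' ?_
  filter_upwards [eventually_gt_atTop 0] with x hx
  rw [mul_add, mul_neg, mul_left_comm, ← Real.rpow_add hx, add_sub_cancel]
  ring

theorem tendsto_mul_add_one_rpow_sub_mul_rpow_atBot {p r C c : ℝ} (hp : 0 < p) (hpr : p < r)
    (hC : 0 ≤ C) (hc : 0 < c) :
    Tendsto (fun x : ℝ => C * (x + 1) ^ p - c * x ^ r) atTop atBot := by
  refine tendsto_atBot_mono' atTop ?_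
    (tendsto_mul_rpow_sub_mul_rpow_atBot (C := C * 2 ^ p) hp hpr hc)
  filter_upwards [eventually_ge_atTop 1] with x hx
  have h2x : (x + 1) ^ p ≤ 2 ^ p * x ^ p := by
    rw [← Real.mul_rpow zero_le_two (by linarith)]
    exact Real.rpow_le_rpow (by linarith) (by linarith) hp.le
  nlinarith [mul_le_mul_of_nonneg_left h2x hC]

theorem stmt_10_general (qa qr : ℝ) (h1 : 1 ≤ qa) (h2 : qa < qr)
    (ω : Measure ℝ) (hω : ω = volume.restrict (Set.Icc (-1 : ℝ) 0))
    (μ : ℕ → Measure ℝ)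
    (hμ : ∀ n, μ n = ((n : ℝ≥0∞))⁻¹ • volume.restrict (Set.Icc (0 : ℝ) (n : ℝ)))
    (V W E : ℕ → ℝ)
    (hV : ∀ n, V n = ∫ y, ∫ x, |x - y| ^ qa ∂ω ∂(μ n))
    (hW : ∀ n, W n = -(1 / 2) * ∫ x, ∫ y, |x - y| ^ qr ∂(μ n) ∂(μ n))
    (hE : ∀ n, E n = V n + W n) :
    (∀ n : ℕ, 1 ≤ n → V n ≤ ((n : ℝ) + 1) ^ qa / (qa + 1)) ∧
    (∀ n : ℕ, 1 ≤ n → W n = -((n : ℝ) ^ qr / ((qr + 1) * (qr + 2)))) ∧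
    Tendsto E atTop atBot ∧
    ¬ ∃ ν : Measure ℝ, IsProbabilityMeasure ν ∧
        ∀ ν' : Measure ℝ, IsProbabilityMeasure ν' →
          ((∫ y, ∫ x, |x - y| ^ qa ∂ω ∂ν) - (1 / 2) * ∫ x, ∫ y, |x - y| ^ qr ∂ν ∂ν)
            ≤ ((∫ y, ∫ x, |x - y| ^ qa ∂ω ∂ν') -
                (1 / 2) * ∫ x, ∫ y, |x - y| ^ qr ∂ν' ∂ν') := by
  have hμ_cond : ∀ n : ℕ, μ n = volume[|Icc 0 (n : ℝ)] := fun n => by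
    rw [hμ n, ProbabilityTheory.cond, Real.volume_Icc, sub_zero, ofReal_natCast]
  have hV_le : ∀ n : ℕ, 1 ≤ n → V n ≤ ((n : ℝ) + 1) ^ qa / (qa + 1) := fun n hn => by
    rw [hV, hμ_cond, hω]
    exact integral_integral_abs_sub_rpow_cond_Icc_le h1 (Nat.cast_pos.2 hn)
  have hW_eq : ∀ n : ℕ, 1 ≤ n → W n = -((n : ℝ) ^ qr / ((qr + 1) * (qr + 2))) := fun n hn => by
    rw [hW, hμ_cond, integral_integral_abs_sub_rpow_cond_Icc (by linarith) (Nat.cast_pos.2 hn)]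
    ring
  have hE_le : ∀ n : ℕ, 1 ≤ n →
      E n ≤ (qa + 1)⁻¹ * ((n : ℝ) + 1) ^ qa - ((qr + 1) * (qr + 2))⁻¹ * (n : ℝ) ^ qr :=
    fun n hn => by
      rw [hE, hW_eq n hn]
      linarith [hV_le n hn, div_eq_inv_mul (((n : ℝ) + 1) ^ qa) (qa + 1),
        div_eq_inv_mul ((n : ℝ) ^ qr) ((qr + 1) * (qr + 2))]
  have hE_tendsto : Tendsto E atTop atBot :=
    tendsto_atBot_mono' atTop ((eventually_ge_atTop 1).mono hE_le)
      ((tendsto_mul_add_one_rpow_sub_mul_rpow_atBot (by linarith) h2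
        (inv_nonneg.2 (by linarith)) (inv_pos.2 (mul_pos (by linarith) (by linarith)))).comp
        tendsto_natCast_atTop_atTop)
  refine ⟨hV_le, hW_eq, hE_tendsto, ?_⟩
  rintro ⟨ν, -, hν_min⟩
  obtain ⟨n, hE_lt, hn⟩ := ((hE_tendsto.eventually (eventually_lt_atBot
    ((∫ y, ∫ x, |x - y| ^ qa ∂ω ∂ν) - (1 / 2) * ∫ x, ∫ y, |x - y| ^ qr ∂ν ∂ν))).and
      (eventually_ge_atTop 1)).exists
  have hμ_prob : IsProbabilityMeasure (μ n) :=
    hμ_cond n ▸ ProbabilityTheory.cond_isProbabilityMeasure_of_finite (by simp; omega) (by simp)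
  have hν_le := hν_min (μ n) hμ_prob
  rw [hE, hV, hW] at hE_lt
  linarith

theorem stmt_10 (qa qr : ℝ) (h1 : 1 ≤ qa) (h2 : qa < qr) (h3 : qr ≤ 2)
    (ω : Measure ℝ) (hω : ω = volume.restrict (Set.Icc (-1 : ℝ) 0))
    (μ : ℕ → Measure ℝ)
    (hμ : ∀ n, μ n = ((n : ℝ≥0∞))⁻¹ • volume.restrict (Set.Icc (0 : ℝ) (n : ℝ)))
    (V W E : ℕ → ℝ)
    (hV : ∀ n, V n = ∫ y, ∫ x, |x - y| ^ qa ∂ω ∂(μ n))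
    (hW : ∀ n, W n = -(1 / 2) * ∫ x, ∫ y, |x - y| ^ qr ∂(μ n) ∂(μ n))
    (hE : ∀ n, E n = V n + W n) :
    (∀ n : ℕ, 1 ≤ n → V n ≤ ((n : ℝ) + 1) ^ qa / (qa + 1)) ∧
    (∀ n : ℕ, 1 ≤ n → W n = -((n : ℝ) ^ qr / ((qr + 1) * (qr + 2)))) ∧
    Tendsto E atTop atBot ∧
    ¬ ∃ ν : Measure ℝ, IsProbabilityMeasure ν ∧
        ∀ ν' : Measure ℝ, IsProbabilityMeasure ν' →
          ((∫ y, ∫ x, |x - y| ^ qa ∂ω ∂ν) - (1 / 2) * ∫ x, ∫ y, |x - y| ^ qr ∂ν ∂ν)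
            ≤ ((∫ y, ∫ x, |x - y| ^ qa ∂ω ∂ν') -
                (1 / 2) * ∫ x, ∫ y, |x - y| ^ qr ∂ν' ∂ν') :=
  stmt_10_general qa qr h1 h2 ω hω μ hμ V W E hV hW hE
end
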